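/- arXiv:2507.09405 — 11 statements merged into one kernel-verified Lean document; each statement's English description precedes it below -/
import Mathlib

section
/- There exists exactly one formal power series S in R satisfying S = 1 + Σ_{n≥1} t_n·S^n (where the sum is the tsum of the summable family (t_n·S^n)_{n≥1} in the product topology). -/
/-!
Write `Φ A = 1 + ∑ t_k A^k`. If `A` and `B` agree in all total degrees `< n`, then `Φ A` and
`Φ B` agree in all total degrees `≤ n`, because every term carries a factor `t_k`. So the
coefficients of a solution are determined degree by degree, which gives uniqueness, and the
iterates `Φ^[k] 0` stabilise in each degree; their coefficientwise limit is a solution.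
-/

/- `R = MvPowerSeries ℕ ℚ`, with the product (coefficientwise) topology. -/
noncomputable instance : TopologicalSpace (MvPowerSeries ℕ ℚ) :=
  inferInstanceAs (TopologicalSpace ((ℕ →₀ ℕ) → ℚ))

open MvPowerSeries

namespace MvPowerSeries

variable {σ R : Type*} [CommSemiring R]

def EqBelow (n : ℕ) (A B : MvPowerSeries σ R) : Prop :=
  ∀ d : σ →₀ ℕ, d.degree < n → coeff d A = coeff d B

namespace EqBelow

variable {n : ℕ} {A B C D : MvPowerSeries σ R}

theorem zero (A B : MvPowerSeries σ R) : EqBelow 0 A B :=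
  fun _ hd => absurd hd (Nat.not_lt_zero _)

theorem refl (n : ℕ) (A : MvPowerSeries σ R) : EqBelow n A A := fun _ _ => rfl

theorem trans (h : EqBelow n A B) (h' : EqBelow n B C) : EqBelow n A C :=
  fun d hd => (h d hd).trans (h' d hd)

theorem mono {m : ℕ} (h : EqBelow n A B) (hmn : m ≤ n) : EqBelow m A B :=
  fun d hd => h d (hd.trans_le hmn)

theorem add (h : EqBelow n A B) (h' : EqBelow n C D) : EqBelow n (A + C) (B + D) :=
  fun d hd => by rw [map_add, map_add, h d hd, h' d hd]

theorem mul (h : EqBelow n A B) (h' : EqBelow n C D) : EqBelow n (A * C) (B * D) := by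
  classical
  intro d hd
  rw [coeff_mul, coeff_mul]
  refine Finset.sum_congr rfl fun p hp => ?_
  rw [Finset.HasAntidiagonal.mem_antidiagonal] at hp
  have h₁ : p.1.degree ≤ d.degree := Finsupp.degree_mono (hp ▸ le_self_add)
  have h₂ : p.2.degree ≤ d.degree := Finsupp.degree_mono (hp ▸ le_add_self)
  rw [h _ (h₁.trans_lt hd), h' _ (h₂.trans_lt hd)]

theorem pow (h : EqBelow n A B) (k : ℕ) : EqBelow n (A ^ k) (B ^ k) := by
  induction k with
  | zero => exact refl n 1
  | succ k ih => simpa only [pow_succ] using ih.mul h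

theorem X_mul (h : EqBelow n A B) (i : σ) : EqBelow (n + 1) (X i * A) (X i * B) := by
  intro d hd
  rw [X, coeff_monomial_mul, coeff_monomial_mul]
  split_ifs with hi
  · refine congrArg _ (h _ ?_)
    have := map_add Finsupp.degree (d - Finsupp.single i 1) (Finsupp.single i 1)
    rw [tsub_add_cancel_of_le hi, Finsupp.degree_single] at this
    omega
  · rfl

open WithPiTopology in
theorem tsum [TopologicalSpace R] [T2Space R] {ι : Type*} {f g : ι → MvPowerSeries σ R}
    (hf : Summable f) (hg : Summable g) (h : ∀ i, EqBelow n (f i) (g i)) :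
    EqBelow n (∑' i, f i) (∑' i, g i) := by
  intro d hd
  rw [(hasSum_iff_hasSum_coeff.mp hf.hasSum d).tsum_eq.symm,
    (hasSum_iff_hasSum_coeff.mp hg.hasSum d).tsum_eq.symm]
  exact tsum_congr fun i => h i d hd

end EqBelow

section FixedPoint

variable {Φ : MvPowerSeries σ R → MvPowerSeries σ R}

theorem eq_of_fixedPoint_of_eqBelow
    (hΦ : ∀ n A B, EqBelow n A B → EqBelow (n + 1) (Φ A) (Φ B)) {S T : MvPowerSeries σ R}
    (hS : Φ S = S) (hT : Φ T = T) : S = T := by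
  have agree : ∀ n, EqBelow n S T := by
    intro n
    induction n with
    | zero => exact .zero _ _
    | succ n ih => exact hS ▸ hT ▸ hΦ n S T ih
  ext d
  exact agree (d.degree + 1) d (Nat.lt_succ_self _)

theorem exists_fixedPoint_of_eqBelow
    (hΦ : ∀ n A B, EqBelow n A B → EqBelow (n + 1) (Φ A) (Φ B)) : ∃ S, Φ S = S := by
  set a : ℕ → MvPowerSeries σ R := fun k => Φ^[k] 0 with ha
  have step : ∀ k, EqBelow k (a k) (a (k + 1)) := by
    intro k
    induction k with
    | zero => exact .zero _ _
    | succ k ih => simpa only [ha, Function.iterate_succ_apply'] using hΦ k _ _ ih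
  have stable : ∀ k l, k ≤ l → EqBelow k (a k) (a l) := by
    intro k l hkl
    induction l, hkl using Nat.le_induction with
    | base => exact .refl _ _
    | succ l hkl ih => exact ih.trans ((step l).mono hkl)
  let S : MvPowerSeries σ R := fun d => coeff d (a (d.degree + 1))
  have hS : ∀ k, EqBelow k S (a k) := fun k d hd =>
    stable (d.degree + 1) k hd d (Nat.lt_succ_self _)
  refine ⟨S, ?_⟩
  ext d
  have := hΦ _ _ _ (hS d.degree) d (Nat.lt_succ_self _)
  rwa [← Function.iterate_succ_apply' Φ] at this

theorem existsUnique_fixedPoint_of_eqBelow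
    (hΦ : ∀ n A B, EqBelow n A B → EqBelow (n + 1) (Φ A) (Φ B)) : ∃! S, Φ S = S :=
  let ⟨S, hS⟩ := exists_fixedPoint_of_eqBelow hΦ
  ⟨S, hS, fun _ hT => eq_of_fixedPoint_of_eqBelow hΦ hT hS⟩

end FixedPoint

open WithPiTopology in
theorem summable_X_mul [TopologicalSpace R] {ι : Type*} {e : ι → σ} (he : Function.Injective e)
    (g : ι → MvPowerSeries σ R) : Summable fun i => X (e i) * g i := by
  refine summable_iff_summable_coeff.mpr fun d => summable_of_hasFiniteSupport ?_
  refine (d.support.finite_toSet.preimage he.injOn).subset fun i hi => ?_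
  contrapose! hi
  simp_all [X, coeff_monomial_mul]

open WithPiTopology in
theorem eqBelow_succ_one_add_tsum_X_mul_pow [TopologicalSpace R] [T2Space R] {n : ℕ}
    {A B : MvPowerSeries ℕ R} (h : EqBelow n A B) :
    EqBelow (n + 1) (1 + ∑' k : ℕ, X (k + 1) * A ^ (k + 1))
      (1 + ∑' k : ℕ, X (k + 1) * B ^ (k + 1)) :=
  (EqBelow.refl _ 1).add <| EqBelow.tsum (summable_X_mul (add_left_injective 1) _)
    (summable_X_mul (add_left_injective 1) _) fun _ => (h.pow _).X_mul _

end MvPowerSeries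

/-- There exists exactly one formal power series `S` in `R` satisfying
`S = 1 + ∑_{n ≥ 1} t_n · S ^ n` (the sum being the tsum of the family
`(t_n · S ^ n)_{n ≥ 1}`, here reindexed by `n ↦ n + 1`). -/
theorem geode_stmt0 :
    ∃! S : MvPowerSeries ℕ ℚ,
      S = 1 + ∑' n : ℕ, (X (n + 1) : MvPowerSeries ℕ ℚ) * S ^ (n + 1) := by
  refine (existsUnique_congr fun _ => eq_comm).mp ?_
  exact existsUnique_fixedPoint_of_eqBelow fun _ _ _ => eqBelow_succ_one_add_tsum_X_mul_pow
end

section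
/- (Wildberger–Rubine Geode theorem.) There exists a formal power series G ∈ R such that S − 1 = G·S_1; moreover G is unique, since R is an integral domain and S_1 ≠ 0. -/
open MvPowerSeries

namespace MvPowerSeries

variable {σ R : Type*}

theorem coeff_X_mul_of_eq_zero [Semiring R] {d : σ →₀ ℕ} {s : σ} (hd : d s = 0)
    (φ : MvPowerSeries σ R) : coeff d (X s * φ) = 0 := by
  rw [X, coeff_monomial_mul, if_neg]
  intro h
  simpa [hd] using h s

open WithPiTopology

variable [Semiring R] [TopologicalSpace R] {ι : Type*} {v : ι → σ}

theorem summable_X_mul_s1 (hv : v.Injective) (φ : ι → MvPowerSeries σ R) :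
    Summable fun i ↦ X (v i) * φ i := by
  refine summable_iff_summable_coeff.2 fun d ↦ summable_of_hasFiniteSupport ?_
  refine (d.support.finite_toSet.preimage hv.injOn).subset fun i hi ↦ ?_
  by_contra h
  exact hi (coeff_X_mul_of_eq_zero (by simpa using h) _)

theorem summable_X (hv : v.Injective) : Summable fun i ↦ (X (v i) : MvPowerSeries σ R) := by
  simpa using summable_X_mul_s1 hv (fun _ ↦ (1 : MvPowerSeries σ R))

variable [T2Space R]

theorem constantCoeff_tsum_X_mul (hv : v.Injective) (φ : ι → MvPowerSeries σ R) :
    constantCoeff (∑' i, X (v i) * φ i) = 0 := by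
  rw [← coeff_zero_eq_constantCoeff_apply,
    ((hasSum_iff_hasSum_coeff.1 (summable_X_mul_s1 hv φ).hasSum) 0).tsum_eq.symm]
  simp [coeff_zero_X_mul]

theorem tsum_X_ne_zero [Nontrivial R] [Nonempty ι] (hv : v.Injective) :
    ∑' i, (X (v i) : MvPowerSeries σ R) ≠ 0 := by
  classical
  obtain ⟨i⟩ := ‹Nonempty ι›
  have hcoeff :
      HasSum (fun j ↦ coeff (Finsupp.single (v i) 1) (X (v j) : MvPowerSeries σ R)) 1 := by
    convert hasSum_single i fun j hj ↦ ?_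
    · simp
    · rw [coeff_X, if_neg]
      exact fun h ↦ hj (hv (Finsupp.single_left_injective one_ne_zero h).symm)
  intro h
  have := (hasSum_iff_hasSum_coeff.1 (summable_X hv).hasSum _).unique hcoeff
  simp [h] at this

end MvPowerSeries

theorem sub_one_mul_one_sub_tsum_geom_sum {A : Type*} [CommRing A] [TopologicalSpace A]
    [IsTopologicalRing A] [T2Space A] {x : ℕ → A} (hx : ∀ b : ℕ → A, Summable fun n ↦ x n * b n)
    {S : A} (hS : S = 1 + ∑' n, x n * S ^ (n + 1)) :
    (S - 1) * (1 - ∑' n, x n * ∑ k ∈ Finset.range (n + 1), S ^ k) = ∑' n, x n := by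
  have hterm (n : ℕ) : x n * S ^ (n + 1) =
      x n + x n * (∑ k ∈ Finset.range (n + 1), S ^ k) * (S - 1) := by
    rw [mul_assoc, geom_sum_mul]; ring
  have hgeom := hx fun n ↦ ∑ k ∈ Finset.range (n + 1), S ^ k
  have hx1 : Summable x := by simpa using hx 1
  rw [tsum_congr hterm, hx1.tsum_add (hgeom.mul_right _), hgeom.tsum_mul_right] at hS
  linear_combination hS

/-- (Wildberger–Rubine Geode theorem.) If `S` is the formal power series satisfying
`S = 1 + ∑_{n ≥ 1} t_n · S ^ n`, and `S₁ = ∑_{n ≥ 1} t_n`, then there exists exactly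
one `G ∈ R` with `S - 1 = G · S₁`. -/
theorem geode_stmt1 (S : MvPowerSeries ℕ ℚ)
    (hS : S = 1 + ∑' n : ℕ, (X (n + 1) : MvPowerSeries ℕ ℚ) * S ^ (n + 1)) :
    ∃! G : MvPowerSeries ℕ ℚ,
      S - 1 = G * ∑' n : ℕ, (X (n + 1) : MvPowerSeries ℕ ℚ) := by
  -- the topology on `R` is definitionally `MvPowerSeries.WithPiTopology`'s
  have : IsTopologicalRing (MvPowerSeries ℕ ℚ) := WithPiTopology.instIsTopologicalRing ℕ ℚ
  have : T2Space (MvPowerSeries ℕ ℚ) := WithPiTopology.instT2Space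
  have hv : Function.Injective (· + 1 : ℕ → ℕ) := add_left_injective 1
  set T := ∑' n : ℕ, X (n + 1) * ∑ k ∈ Finset.range (n + 1), S ^ k
  have hx : ∀ φ : ℕ → MvPowerSeries ℕ ℚ, Summable fun n ↦ X (n + 1) * φ n := summable_X_mul_s1 hv
  have hfac : (S - 1) * (1 - T) = ∑' n : ℕ, (X (n + 1) : MvPowerSeries ℕ ℚ) :=
    sub_one_mul_one_sub_tsum_geom_sum hx hS
  have hT : constantCoeff T = 0 := constantCoeff_tsum_X_mul hv _
  obtain ⟨u, hu⟩ : IsUnit (1 - T) := by simp [isUnit_iff_constantCoeff, hT]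
  have hG : S - 1 = ↑u⁻¹ * ∑' n : ℕ, (X (n + 1) : MvPowerSeries ℕ ℚ) := by
    rw [← hfac, ← hu, mul_comm, Units.mul_inv_cancel_right]
  exact ⟨↑u⁻¹, hG, fun G hG' ↦ mul_right_cancel₀ (tsum_X_ne_zero hv) (hG'.symm.trans hG)⟩
end

section
/- (Theorem 1, equation (4).) G·(1 − Σ_{n≥1} t_n·(1 + S + S² + ⋯ + S^{n−1})) = 1, where the sum is the tsum of the summable family (t_n·Σ_{k=0}^{n−1} S^k)_{n≥1}. -/
open MvPowerSeries

/-!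
Since `S ^ n = 1 + (S - 1) (1 + S + ⋯ + S ^ (n - 1))`, the defining equation of `S` reads
`S - 1 = S₁ + (S - 1) T` with `T = ∑ tₙ (1 + S + ⋯ + S ^ (n - 1))`. Substituting `S - 1 = G S₁`
gives `S₁ (G (1 - T) - 1) = 0`, and `S₁ ≠ 0` in the integral domain of power series.
-/

instance : IsTopologicalRing (MvPowerSeries ℕ ℚ) := WithPiTopology.instIsTopologicalRing ℕ ℚ

instance : T2Space (MvPowerSeries ℕ ℚ) := WithPiTopology.instT2Space

theorem HasSum.mul_pow_succ {A : Type*} [CommRing A] [TopologicalSpace A]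
    [IsTopologicalSemiring A] {x : ℕ → A} {s t : A} (S : A) (hs : HasSum x s)
    (ht : HasSum (fun n ↦ x n * ∑ k ∈ Finset.range (n + 1), S ^ k) t) :
    HasSum (fun n ↦ x n * S ^ (n + 1)) (s + (S - 1) * t) := by
  convert hs.add (ht.mul_left (S - 1)) using 1
  funext n
  linear_combination x n * (mul_geom_sum S (n + 1)).symm

namespace MvPowerSeries

variable {σ R ι : Type*} [Semiring R]

theorem coeff_X_mul_eq_zero {d : σ →₀ ℕ} {i : σ} (hi : d i = 0) (f : MvPowerSeries σ R) :
    coeff d (X i * f) = 0 := by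
  rw [X_def, coeff_monomial_mul, if_neg]
  simp [Finsupp.single_le_iff, hi]

namespace WithPiTopology

variable [TopologicalSpace R] {i : ι → σ}

theorem summable_X_mul (hi : Function.Injective i) (f : ι → MvPowerSeries σ R) :
    Summable fun n ↦ X (i n) * f n := by
  refine summable_iff_summable_coeff.2 fun d ↦ ?_
  refine summable_of_ne_finset_zero (s := d.support.preimage i hi.injOn) fun n hn ↦ ?_
  exact coeff_X_mul_eq_zero (by simpa using hn) _

theorem summable_X (hi : Function.Injective i) :
    Summable fun n ↦ (X (i n) : MvPowerSeries σ R) := by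
  simpa using summable_X_mul hi fun _ ↦ (1 : MvPowerSeries σ R)

theorem tsum_X_ne_zero [Nontrivial R] [T2Space R] [Nonempty ι] (hi : Function.Injective i) :
    ∑' n, (X (i n) : MvPowerSeries σ R) ≠ 0 := by
  classical
  obtain ⟨a⟩ := ‹Nonempty ι›
  have hsum := hasSum_iff_hasSum_coeff.1 (summable_X (R := R) hi).hasSum (Finsupp.single (i a) 1)
  have hcoeff : (fun n ↦ coeff (Finsupp.single (i a) 1) (X (i n) : MvPowerSeries σ R)) =
      fun n ↦ if n = a then 1 else 0 := by
    funext n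
    simp [coeff_X, Finsupp.single_left_inj one_ne_zero, hi.eq_iff, eq_comm]
  intro h
  rw [hcoeff, h, map_zero] at hsum
  exact one_ne_zero ((hasSum_ite_eq a 1).unique hsum)

end WithPiTopology

end MvPowerSeries

/-- (Theorem 1, equation (4).) `G · (1 − ∑_{n ≥ 1} t_n · (1 + S + S² + ⋯ + S^{n-1})) = 1`,
where the sum is the tsum of the family `(t_n · ∑_{k=0}^{n-1} S^k)_{n ≥ 1}`
(here reindexed by `n ↦ n + 1`). -/
theorem geode_stmt5 (S G : MvPowerSeries ℕ ℚ)
    (hS : S = 1 + ∑' n : ℕ, (X (n + 1) : MvPowerSeries ℕ ℚ) * S ^ (n + 1))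
    (hG : S - 1 = G * ∑' n : ℕ, (X (n + 1) : MvPowerSeries ℕ ℚ)) :
    G * (1 - ∑' n : ℕ, (X (n + 1) : MvPowerSeries ℕ ℚ) *
      ∑ k ∈ Finset.range (n + 1), S ^ k) = 1 := by
  set S₁ := ∑' n : ℕ, (X (n + 1) : MvPowerSeries ℕ ℚ)
  set T := ∑' n : ℕ, (X (n + 1) : MvPowerSeries ℕ ℚ) * ∑ k ∈ Finset.range (n + 1), S ^ k
  have hsucc : Function.Injective (· + 1 : ℕ → ℕ) := add_left_injective 1
  have hS₁ : HasSum (fun n ↦ (X (n + 1) : MvPowerSeries ℕ ℚ)) S₁ :=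
    (WithPiTopology.summable_X hsucc).hasSum
  have hT : HasSum (fun n ↦ (X (n + 1) : MvPowerSeries ℕ ℚ) *
      ∑ k ∈ Finset.range (n + 1), S ^ k) T :=
    (WithPiTopology.summable_X_mul hsucc _).hasSum
  have hS₁_ne_zero : S₁ ≠ 0 := WithPiTopology.tsum_X_ne_zero hsucc
  have hexpand : S - 1 = S₁ + (S - 1) * T := by
    rw [← (hS₁.mul_pow_succ S hT).tsum_eq]
    exact sub_eq_of_eq_add' hS
  rw [hG] at hexpand
  refine mul_right_cancel₀ hS₁_ne_zero ?_
  linear_combination hexpand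
end

section
/- (Corollary.) Let m ≥ 1 and let u_1, …, u_m be formal power series in one variable x over ℚ, each with zero constant coefficient, such that u_1 + ⋯ + u_m = 0. Let σ be the substitution sending t_n to u_n for 1 ≤ n ≤ m and to 0 for n > m (this substitution of G and H is well defined since each u_n has zero constant coefficient and all but finitely many are 0). Then (subst σ G)·(1 − Σ_{n=1}^m n·u_n) = 1, and subst σ H = subst σ G. -/
noncomputable instance : TopologicalSpace (PowerSeries ℚ) :=
  inferInstanceAs (TopologicalSpace ((Unit →₀ ℕ) → ℚ))

open MvPowerSeries in
/-- Substitution of the one-variable power series `σ n` for the variable `t_n` (for each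
`n : ℕ`) in a multivariate power series `F`: the sum over all monomials `m` of the
coefficient of `m` in `F` times `∏_i (σ i) ^ (m i)`. -/
noncomputable def substGeode (σ : ℕ → PowerSeries ℚ) (F : MvPowerSeries ℕ ℚ) :
    PowerSeries ℚ :=
  ∑' m : ℕ →₀ ℕ, (coeff m F) • ∏ i ∈ m.support, (σ i) ^ (m i)

open MvPowerSeries

/-!
Under the substitution, `S₁ = ∑ tₙ` goes to `∑ uₙ = 0`, so `S - 1 = G S₁` forces `S ↦ 1`, and then
`G = S H` gives `H ↦ G`. Writing `S^(n+1) = 1 + (S - 1)(1 + S + ⋯ + S^n)` in the equation of `S`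
and cancelling `S₁` yields `G = 1 + G ∑ tₙ (1 + S + ⋯ + S^(n-1))`, whose image is
`G = 1 + G ∑ n uₙ`.

`substGeode` agrees with `MvPowerSeries.subst`, so it is a ring homomorphism. It only sees the
monomials in `t_1, …, t_m`, which is how it sends a convergent series `∑ tₙ fₙ` to a finite sum.
-/

open Finset

instance inst_s7 : T2Space (MvPowerSeries ℕ ℚ) := WithPiTopology.instT2Space
instance : T2Space (PowerSeries ℚ) := WithPiTopology.instT2Space
instance : IsTopologicalSemiring (MvPowerSeries ℕ ℚ) :=
  WithPiTopology.instIsTopologicalSemiring ℕ ℚ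

lemma sum_Icc_one_eq_sum_range {M : Type*} [AddCommMonoid M] (f : ℕ → M) (m : ℕ) :
    ∑ n ∈ Icc 1 m, f n = ∑ n ∈ range m, f (n + 1) := by
  rw [range_eq_Ico, sum_Ico_add', zero_add, Ico_add_one_right_eq_Icc]

section DivisibleByVariables

variable {f : ℕ → MvPowerSeries ℕ ℚ}

lemma summable_of_X_succ_dvd (hf : ∀ n, X (n + 1) ∣ f n) : Summable f := by
  refine WithPiTopology.summable_iff_summable_coeff.mpr fun d => summable_of_hasFiniteSupport ?_
  refine (d.support.finite_toSet.image Nat.pred).subset fun n hn => ?_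
  exact ⟨n + 1, Finsupp.mem_support_iff.mpr fun h => hn (X_dvd_iff.mp (hf n) d h), rfl⟩

lemma coeff_tsum_of_X_succ_dvd (hf : ∀ n, X (n + 1) ∣ f n) {m : ℕ} {d : ℕ →₀ ℕ}
    (hd : ∀ i, m < i → d i = 0) :
    coeff d (∑' n, f n) = coeff d (∑ n ∈ range m, f n) := by
  rw [map_sum, ← (WithPiTopology.hasSum_iff_hasSum_coeff.mp
    (summable_of_X_succ_dvd hf).hasSum d).tsum_eq]
  exact tsum_eq_sum fun n hn => X_dvd_iff.mp (hf n) d (hd _ (by simpa using hn))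

lemma tsum_X_succ_ne_zero : ∑' n, (X (n + 1) : MvPowerSeries ℕ ℚ) ≠ 0 := by
  intro h
  have h1 := coeff_tsum_of_X_succ_dvd (f := fun n => X (n + 1)) (fun _ => dvd_rfl) (m := 1)
    (d := Finsupp.single 1 1) fun i hi => Finsupp.single_eq_of_ne (by omega)
  simp [h] at h1

end DivisibleByVariables

section Substitution

variable {τ S : Type*} [CommRing S]

lemma subst_congr_of_coeff_eq {σ R : Type*} [CommRing R] [Algebra R S]
    {a : σ → MvPowerSeries τ S} (ha : HasSubst a) {F F' : MvPowerSeries σ R}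
    (h : ∀ d : σ →₀ ℕ, (∀ i ∈ d.support, a i ≠ 0) → coeff d F = coeff d F') :
    subst a F = subst a F' := by
  rw [← sub_eq_zero, ← subst_sub ha]
  ext e
  rw [coeff_subst ha, map_zero]
  refine finsum_eq_zero_of_forall_eq_zero fun d => ?_
  by_cases hd : ∀ i ∈ d.support, a i ≠ 0
  · rw [map_sub, h d hd, sub_self, zero_smul]
  · push Not at hd
    obtain ⟨i, hi, hai⟩ := hd
    rw [Finsupp.prod, prod_eq_zero hi (by rw [hai, zero_pow (Finsupp.mem_support_iff.mp hi)]),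
      map_zero, smul_zero]

lemma hasSubst_of_constantCoeff_zero_of_eq_zero_of_lt {a : ℕ → MvPowerSeries τ S} {m : ℕ}
    (ha₀ : ∀ n, constantCoeff (a n) = 0) (ham : ∀ n, m < n → a n = 0) : HasSubst a where
  const_coeff n := by rw [ha₀ n]; exact IsNilpotent.zero
  coeff_zero d := (Set.finite_Iic m).subset fun n hn => by
    by_contra h
    exact hn (by rw [ham n (not_le.mp h), map_zero])

lemma substAlgHom_tsum_of_X_succ_dvd [Algebra ℚ S] {a : ℕ → MvPowerSeries τ S} (ha : HasSubst a)
    {m : ℕ} (ham : ∀ n, m < n → a n = 0) {f : ℕ → MvPowerSeries ℕ ℚ} (hf : ∀ n, X (n + 1) ∣ f n) :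
    substAlgHom ha (∑' n, f n) = ∑ n ∈ range m, substAlgHom ha (f n) := by
  rw [← map_sum, coe_substAlgHom]
  refine subst_congr_of_coeff_eq ha fun d hd => coeff_tsum_of_X_succ_dvd hf fun i hi => ?_
  by_contra h
  exact hd i (Finsupp.mem_support_iff.mpr h) (ham i hi)

lemma substGeode_eq_subst {σ : ℕ → PowerSeries ℚ} (hσ : HasSubst σ) :
    substGeode σ = subst σ := by
  funext F
  refine HasSum.tsum_eq (WithPiTopology.hasSum_iff_hasSum_coeff.mpr fun e => ?_)
  have hfin := coeff_subst_finite hσ F e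
  simp only [coeff_smul]
  rw [coeff_subst hσ, ← tsum_eq_finsum (L := .unconditional _) hfin]
  exact (summable_of_hasFiniteSupport hfin).hasSum

end Substitution

lemma geode_eq_one_add_mul {S G : MvPowerSeries ℕ ℚ}
    (hS : S = 1 + ∑' n : ℕ, (X (n + 1) : MvPowerSeries ℕ ℚ) * S ^ (n + 1))
    (hG : S - 1 = G * ∑' n : ℕ, (X (n + 1) : MvPowerSeries ℕ ℚ)) :
    G = 1 + G * ∑' n : ℕ, (X (n + 1) : MvPowerSeries ℕ ℚ) * ∑ j ∈ range (n + 1), S ^ j := by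
  set S₁ : MvPowerSeries ℕ ℚ := ∑' n : ℕ, X (n + 1)
  set T : MvPowerSeries ℕ ℚ := ∑' n : ℕ, X (n + 1) * ∑ j ∈ range (n + 1), S ^ j
  have hS' : S - 1 = S₁ + (S - 1) * T := calc
    S - 1 = ∑' n : ℕ, (X (n + 1) : MvPowerSeries ℕ ℚ) * S ^ (n + 1) := sub_eq_of_eq_add' hS
    _ = ∑' n : ℕ, (X (n + 1) + (S - 1) * (X (n + 1) * ∑ j ∈ range (n + 1), S ^ j)) :=
      tsum_congr fun n => by linear_combination -(X (n + 1)) * mul_geom_sum S (n + 1)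
    _ = S₁ + (S - 1) * T := by
      rw [(summable_of_X_succ_dvd fun _ => dvd_rfl).tsum_add
        (summable_of_X_succ_dvd fun _ => dvd_mul_of_dvd_right (dvd_mul_right _ _) _),
        (summable_of_X_succ_dvd fun _ => dvd_mul_right _ _).tsum_mul_left]
  refine mul_left_cancel₀ tsum_X_succ_ne_zero ?_
  linear_combination (T - 1) * hG + hS'

theorem geode_stmt7_general (m : ℕ) (u : ℕ → PowerSeries ℚ)
    (hu0 : ∀ n, 1 ≤ n → n ≤ m → PowerSeries.constantCoeff (u n) = 0)
    (husum : ∑ n ∈ Finset.Icc 1 m, u n = 0)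
    (S G H : MvPowerSeries ℕ ℚ)
    (hS : S = 1 + ∑' n : ℕ, (X (n + 1) : MvPowerSeries ℕ ℚ) * S ^ (n + 1))
    (hG : S - 1 = G * ∑' n : ℕ, (X (n + 1) : MvPowerSeries ℕ ℚ))
    (hH : G = S * H) :
    (substGeode (fun n => if 1 ≤ n ∧ n ≤ m then u n else 0) G) *
        (1 - ∑ n ∈ Finset.Icc 1 m, (n : PowerSeries ℚ) * u n) = 1 ∧
      substGeode (fun n => if 1 ≤ n ∧ n ≤ m then u n else 0) H =
        substGeode (fun n => if 1 ≤ n ∧ n ≤ m then u n else 0) G := by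
  set σ : ℕ → PowerSeries ℚ := fun n => if 1 ≤ n ∧ n ≤ m then u n else 0
  have hσ_succ : ∀ n ∈ range m, σ (n + 1) = u (n + 1) := fun n hn =>
    if_pos ⟨by omega, by simpa using hn⟩
  have hσ_large : ∀ n, m < n → σ n = 0 := fun n hn => if_neg (by omega)
  have hσ : HasSubst σ := by
    refine hasSubst_of_constantCoeff_zero_of_eq_zero_of_lt (fun n => ?_) hσ_large
    by_cases hn : 1 ≤ n ∧ n ≤ m
    · simp only [σ, if_pos hn]
      exact hu0 n hn.1 hn.2
    · simp only [σ, if_neg hn, map_zero]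
  rw [substGeode_eq_subst hσ, ← coe_substAlgHom hσ]
  have hσS₁ : substAlgHom hσ (∑' n, (X (n + 1) : MvPowerSeries ℕ ℚ)) = 0 := by
    rw [substAlgHom_tsum_of_X_succ_dvd hσ hσ_large fun _ => dvd_rfl, ← husum,
      sum_Icc_one_eq_sum_range]
    exact sum_congr rfl fun n hn => by rw [substAlgHom_X, hσ_succ n hn]
  have hσS : substAlgHom hσ S = 1 := by
    have h := congrArg (substAlgHom hσ) hG
    rwa [map_sub, map_one, map_mul, hσS₁, mul_zero, sub_eq_zero] at h
  have hσT : substAlgHom hσ (∑' n, X (n + 1) * ∑ j ∈ range (n + 1), S ^ j) =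
      ∑ n ∈ Icc 1 m, (n : PowerSeries ℚ) * u n := by
    rw [substAlgHom_tsum_of_X_succ_dvd hσ hσ_large fun _ => dvd_mul_right _ _,
      sum_Icc_one_eq_sum_range]
    refine sum_congr rfl fun n hn => ?_
    rw [map_mul, substAlgHom_X, hσ_succ n hn, map_sum]
    simp only [map_pow, hσS, one_pow, sum_const, card_range, nsmul_one]
    push_cast
    ring
  constructor
  · have hσG := congrArg (substAlgHom hσ) (geode_eq_one_add_mul hS hG)
    rw [map_add, map_one, map_mul, hσT] at hσG
    linear_combination hσG
  · rw [hH, map_mul, hσS, one_mul]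

/-- (Corollary.) Let `m ≥ 1` and let `u 1, …, u m` be one-variable power series over `ℚ`
with zero constant coefficient and `u 1 + ⋯ + u m = 0`. Let `σ` send `t_n` to `u n` for
`1 ≤ n ≤ m` and to `0` for other `n`. Then `(subst σ G) · (1 − ∑_{n=1}^m n·u n) = 1` and
`subst σ H = subst σ G`. -/
theorem geode_stmt7 (m : ℕ) (hm : 1 ≤ m) (u : ℕ → PowerSeries ℚ)
    (hu0 : ∀ n, 1 ≤ n → n ≤ m → PowerSeries.constantCoeff (u n) = 0)
    (husum : ∑ n ∈ Finset.Icc 1 m, u n = 0)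
    (S G H : MvPowerSeries ℕ ℚ)
    (hS : S = 1 + ∑' n : ℕ, (X (n + 1) : MvPowerSeries ℕ ℚ) * S ^ (n + 1))
    (hG : S - 1 = G * ∑' n : ℕ, (X (n + 1) : MvPowerSeries ℕ ℚ))
    (hH : G = S * H) :
    (substGeode (fun n => if 1 ≤ n ∧ n ≤ m then u n else 0) G) *
        (1 - ∑ n ∈ Finset.Icc 1 m, (n : PowerSeries ℚ) * u n) = 1 ∧
      substGeode (fun n => if 1 ≤ n ∧ n ≤ m then u n else 0) H =
        substGeode (fun n => if 1 ≤ n ∧ n ≤ m then u n else 0) G :=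
  geode_stmt7_general m u hu0 husum S G H hS hG hH
end

section
/- (Lemma 1.) Let n ≥ 0 and let P be a reverse-nonnegative path whose total sum is −n. Then there exist excursions E_1, …, E_{n+1} such that P = E_1 ++ [−1] ++ E_2 ++ [−1] ++ ⋯ ++ [−1] ++ E_{n+1}, and this factorization is unique; conversely, any path of this form is a reverse-nonnegative path with total sum −n. -/
/-- A path is a finite list of integers all of whose entries are ≥ -1; entries ≥ 0 are
up steps and the entry -1 is the down step. -/
def IsPath (P : List ℤ) : Prop := ∀ s ∈ P, (-1 : ℤ) ≤ s

/-- A nonnegative path: a path all of whose prefix sums are ≥ 0. -/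
def NonnegPath (P : List ℤ) : Prop := IsPath P ∧ ∀ i : ℕ, 0 ≤ (P.take i).sum

/-- A positive path: a path all of whose nonempty prefix sums are > 0. -/
def PositivePath (P : List ℤ) : Prop :=
  IsPath P ∧ ∀ i : ℕ, 1 ≤ i → i ≤ P.length → 0 < (P.take i).sum

/-- An excursion: a nonnegative path with total sum 0. -/
def Excursion (P : List ℤ) : Prop := NonnegPath P ∧ P.sum = 0

/-- A reverse-nonnegative path: a path all of whose suffix sums (the empty suffix
allowed) are ≤ 0. -/
def RevNonnegPath (P : List ℤ) : Prop := IsPath P ∧ ∀ i : ℕ, (P.drop i).sum ≤ 0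
/-!
Reverse-nonnegativity is preserved under concatenation, which gives the converse direction.
For the factorization, cut `P` at the first prefix whose sum is negative: since steps are `≥ -1`,
that prefix is an excursion followed by a down step, and the remainder is again
reverse-nonnegative with total sum one larger. Uniqueness is the same first-passage argument: an
excursion followed by `-1` has a prefix of sum `-1`, so it cannot be a prefix of a longer
excursion.
-/

theorem IsPath.append {A B : List ℤ} (hA : IsPath A) (hB : IsPath B) : IsPath (A ++ B) :=
  List.forall_mem_append.2 ⟨hA, hB⟩

theorem RevNonnegPath.append {A B : List ℤ} (hA : RevNonnegPath A) (hB : RevNonnegPath B) :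
    RevNonnegPath (A ++ B) := by
  refine ⟨hA.1.append hB.1, fun i => ?_⟩
  rw [List.drop_append, List.sum_append]
  exact add_nonpos (hA.2 i) (hB.2 _)

theorem revNonnegPath_down : RevNonnegPath [-1] :=
  ⟨by simp [IsPath], fun i => by cases i <;> simp⟩

theorem RevNonnegPath.drop {P : List ℤ} (hP : RevNonnegPath P) (k : ℕ) :
    RevNonnegPath (P.drop k) :=
  ⟨fun s hs => hP.1 s (List.mem_of_mem_drop hs), fun i => by rw [List.drop_drop]; exact hP.2 _⟩

theorem excursion_iff_revNonnegPath {P : List ℤ} :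
    Excursion P ↔ RevNonnegPath P ∧ P.sum = 0 := by
  have hsplit (i : ℕ) := List.sum_take_add_sum_drop P i
  constructor
  · rintro ⟨⟨hpath, hpre⟩, hsum⟩
    exact ⟨⟨hpath, fun i => by linarith [hpre i, hsplit i]⟩, hsum⟩
  · rintro ⟨⟨hpath, hsuf⟩, hsum⟩
    exact ⟨⟨hpath, fun i => by linarith [hsuf i, hsplit i]⟩, hsum⟩

theorem Excursion.revNonnegPath {P : List ℤ} (h : Excursion P) : RevNonnegPath P :=
  (excursion_iff_revNonnegPath.1 h).1

theorem sum_flatten_intersperse_down {E : List ℤ} {M : List (List ℤ)} (hE : E.sum = 0)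
    (hM : ∀ P ∈ M, P.sum = 0) : (((E :: M).intersperse [-1]).flatten).sum = -(M.length : ℤ) := by
  induction M generalizing E with
  | nil => simpa using hE
  | cons A M ih =>
    rw [List.forall_mem_cons] at hM
    rw [List.intersperse_cons_cons, List.flatten_cons, List.flatten_cons, List.sum_append,
      List.sum_append, ih hM.1 hM.2, hE]
    simp

theorem revNonnegPath_flatten_intersperse_down {E : List ℤ} {M : List (List ℤ)}
    (hE : Excursion E) (hM : ∀ P ∈ M, Excursion P) :
    RevNonnegPath ((E :: M).intersperse [-1]).flatten := by
  induction M generalizing E with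
  | nil => simpa using hE.revNonnegPath
  | cons A M ih =>
    rw [List.forall_mem_cons] at hM
    rw [List.intersperse_cons_cons, List.flatten_cons, List.flatten_cons]
    exact hE.revNonnegPath.append (revNonnegPath_down.append (ih hM.1 hM.2))

-- `A ++ [-1]` has sum `-1`, so it is not a prefix of `B`.
theorem NonnegPath.length_le_of_append_down_eq {A B R S : List ℤ} (hB : NonnegPath B)
    (hA : A.sum = 0) (h : A ++ -1 :: R = B ++ S) : B.length ≤ A.length := by
  by_contra! hlt
  have hdown : (A ++ -1 :: R).take (A.length + 1) = A ++ [-1] := by simp [List.take_append]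
  have hprefix := hB.2 (A.length + 1)
  rw [← List.take_append_of_le_length hlt, ← h, hdown] at hprefix
  simp [hA] at hprefix

theorem Excursion.eq_of_append_down_eq {E₁ E₂ Q₁ Q₂ : List ℤ} (h₁ : Excursion E₁)
    (h₂ : Excursion E₂) (h : E₁ ++ -1 :: Q₁ = E₂ ++ -1 :: Q₂) : E₁ = E₂ ∧ Q₁ = Q₂ := by
  have hlen : E₁.length = E₂.length :=
    le_antisymm (h₁.1.length_le_of_append_down_eq h₂.2 h.symm)
      (h₂.1.length_le_of_append_down_eq h₁.2 h)
  obtain ⟨hE, hQ⟩ := List.append_inj h hlen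
  exact ⟨hE, List.cons_injective hQ⟩

theorem eq_of_flatten_intersperse_down_eq {E₁ E₂ : List ℤ} {M₁ M₂ : List (List ℤ)}
    (hlen : M₁.length = M₂.length) (hE₁ : Excursion E₁) (hM₁ : ∀ P ∈ M₁, Excursion P)
    (hE₂ : Excursion E₂) (hM₂ : ∀ P ∈ M₂, Excursion P)
    (h : ((E₁ :: M₁).intersperse [-1]).flatten = ((E₂ :: M₂).intersperse [-1]).flatten) :
    E₁ :: M₁ = E₂ :: M₂ := by
  induction M₁ generalizing E₁ E₂ M₂ with
  | nil =>
    rw [List.length_nil, eq_comm, List.length_eq_zero_iff] at hlen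
    subst hlen
    simpa using h
  | cons A₁ M₁ ih =>
    obtain ⟨A₂, M₂, rfl⟩ := List.exists_cons_of_length_eq_add_one hlen.symm
    rw [List.forall_mem_cons] at hM₁ hM₂
    simp only [List.intersperse_cons_cons, List.flatten_cons, List.singleton_append] at h
    obtain ⟨rfl, hrest⟩ := hE₁.eq_of_append_down_eq hE₂ h
    rw [ih (by simpa using hlen) hM₁.1 hM₁.2 hM₂.1 hM₂.2 hrest]

theorem IsPath.exists_excursion_append_down {P : List ℤ} (hP : IsPath P) (hneg : P.sum < 0) :
    ∃ E Q, Excursion E ∧ P = E ++ -1 :: Q := by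
  classical
  have hex : ∃ i, (P.take i).sum < 0 := ⟨P.length, by simpa using hneg⟩
  obtain ⟨k, hk⟩ : ∃ k, Nat.find hex = k + 1 :=
    Nat.exists_eq_add_one.2 (Nat.pos_of_ne_zero fun h0 => by simpa [h0] using Nat.find_spec hex)
  have hfirst : (P.take (k + 1)).sum < 0 := hk ▸ Nat.find_spec hex
  have hbefore (j : ℕ) (hj : j ≤ k) : 0 ≤ (P.take j).sum := not_lt.1 (Nat.find_min hex (by omega))
  have hk_lt : k < P.length := by
    by_contra! hle
    rw [List.take_of_length_le (by omega), ← List.take_of_length_le hle] at hfirst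
    exact (hbefore k le_rfl).not_gt hfirst
  rw [List.take_add_one, List.getElem?_eq_getElem hk_lt, Option.toList_some, List.sum_append,
    List.sum_singleton] at hfirst
  have hstep := hP _ (List.getElem_mem hk_lt)
  have hbalanced : (P.take k).sum = 0 := by linarith [hbefore k le_rfl]
  have hdown : P[k] = -1 := by linarith [hbefore k le_rfl]
  refine ⟨P.take k, P.drop (k + 1), ⟨⟨fun s hs => hP s (List.mem_of_mem_take hs), fun i => ?_⟩,
    hbalanced⟩, ?_⟩
  · rw [List.take_take]
    exact hbefore _ (min_le_right _ _)
  · rw [← hdown, ← List.drop_eq_getElem_cons hk_lt, List.take_append_drop]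

theorem exists_flatten_intersperse_down_eq (n : ℕ) {P : List ℤ} (hP : RevNonnegPath P)
    (hsum : P.sum = -n) : ∃ E M, M.length = n ∧ Excursion E ∧ (∀ Q ∈ M, Excursion Q) ∧
      ((E :: M).intersperse [-1]).flatten = P := by
  induction n generalizing P with
  | zero =>
    exact ⟨P, [], rfl, excursion_iff_revNonnegPath.2 ⟨hP, by simpa using hsum⟩, by simp, by simp⟩
  | succ n ih =>
    obtain ⟨E, Q, hE, rfl⟩ := hP.1.exists_excursion_append_down (by rw [hsum]; omega)
    have hQ : RevNonnegPath Q := by simpa using hP.drop (E.length + 1)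
    have hQsum : Q.sum = -n := by
      simp only [List.sum_append, List.sum_cons, hE.2] at hsum
      push_cast at hsum
      linarith
    obtain ⟨E', M, hlen, hE', hM, rfl⟩ := ih hQ hQsum
    exact ⟨E, E' :: M, by simp [hlen], hE, List.forall_mem_cons.2 ⟨hE', hM⟩, by simp⟩

/-- (Lemma 1.) For `n ≥ 0`, a path `P` is a reverse-nonnegative path with total sum
`-n` if and only if it can be written, in exactly one way, as
`E₁ ++ [-1] ++ E₂ ++ [-1] ++ ⋯ ++ [-1] ++ E_{n+1}` with each `Eᵢ` an excursion. -/
theorem geode_stmt12 (n : ℕ) (P : List ℤ) :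
    (RevNonnegPath P ∧ P.sum = -(n : ℤ)) ↔
      ∃! L : List (List ℤ), L.length = n + 1 ∧ (∀ E ∈ L, Excursion E) ∧
        (List.intersperse [(-1 : ℤ)] L).flatten = P := by
  constructor
  · rintro ⟨hP, hsum⟩
    obtain ⟨E, M, hlen, hE, hM, hEM⟩ := exists_flatten_intersperse_down_eq n hP hsum
    refine ⟨E :: M, ⟨by simp [hlen], List.forall_mem_cons.2 ⟨hE, hM⟩, hEM⟩, ?_⟩
    rintro L ⟨hLlen, hL, hLP⟩
    obtain ⟨E', M', rfl⟩ := List.exists_cons_of_length_eq_add_one hLlen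
    rw [List.forall_mem_cons] at hL
    exact eq_of_flatten_intersperse_down_eq (by simpa [hlen] using hLlen) hL.1 hL.2 hE hM
      (hLP.trans hEM.symm)
  · rintro ⟨L, ⟨hlen, hL, rfl⟩, -⟩
    obtain ⟨E, M, rfl⟩ := List.exists_cons_of_length_eq_add_one hlen
    rw [List.forall_mem_cons] at hL
    refine ⟨revNonnegPath_flatten_intersperse_down hL.1 hL.2, ?_⟩
    rw [sum_flatten_intersperse_down hL.1.2 fun Q hQ => (hL.2 Q hQ).2]
    simpa using hlen
end

section
/- The map sending a pair (P, n), where P is a nonnegative path with total sum h and n ≥ 0 is an integer, to the path P ++ [n] ++ (h + n copies of −1) is a bijection from (nonnegative paths) × ℕ onto the set of nonempty excursions. -/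
lemma geode_aux_rep_take_sum (m k : ℕ) :
    ((List.replicate k (-1:ℤ)).take m).sum = -((min m k : ℕ) : ℤ) := by
  simp [List.take_replicate]

lemma geode_aux_nonneg_append_left {A B : List ℤ}
    (h : ∀ i : ℕ, 0 ≤ ((A ++ B).take i).sum) : ∀ i : ℕ, 0 ≤ (A.take i).sum := by
  intro i
  by_cases hi : i ≤ A.length
  · have := h i
    rwa [List.take_append_of_le_length hi] at this
  · rw [List.take_of_length_le (le_of_not_ge hi)]
    have := h A.length
    rwa [List.take_append_of_le_length le_rfl, List.take_length] at this

lemma geode_aux_decomp_unique : ∀ (P Q : List ℤ) (a b : ℤ) (k l : ℕ), 0 ≤ a → 0 ≤ b →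
    P ++ a :: List.replicate k (-1) = Q ++ b :: List.replicate l (-1) →
    P = Q ∧ a = b ∧ k = l := by
  intro P
  induction P with
  | nil =>
    intro Q a b k l ha hb heq
    cases Q with
    | nil =>
      simp only [List.nil_append, List.cons.injEq] at heq
      refine ⟨rfl, heq.1, ?_⟩
      have := congrArg List.length heq.2
      simpa using this
    | cons q Q' =>
      simp only [List.nil_append, List.cons_append, List.cons.injEq] at heq
      exfalso
      have hb' : b ∈ List.replicate k (-1:ℤ) := by
        rw [heq.2]; simp
      have := List.eq_of_mem_replicate hb'
      omega
  | cons p P' ih =>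
    intro Q a b k l ha hb heq
    cases Q with
    | nil =>
      simp only [List.nil_append, List.cons_append, List.cons.injEq] at heq
      exfalso
      have ha' : a ∈ List.replicate l (-1:ℤ) := by
        rw [← heq.2]; simp
      have := List.eq_of_mem_replicate ha'
      omega
    | cons q Q' =>
      simp only [List.cons_append, List.cons.injEq] at heq
      obtain ⟨h1, h2, h3⟩ := ih Q' a b k l ha hb heq.2
      exact ⟨by rw [heq.1, h1], h2, h3⟩

lemma geode_aux_decomp_exists : ∀ (E : List ℤ), NonnegPath E → E ≠ [] →
    ∃ (P : List ℤ) (n : ℤ) (k : ℕ), NonnegPath P ∧ 0 ≤ n ∧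
      E = P ++ n :: List.replicate k (-1) := by
  intro E
  induction E using List.reverseRecOn with
  | nil => intro _ h; exact absurd rfl h
  | append_singleton E' a ih =>
    intro hE _
    have hE' : NonnegPath E' :=
      ⟨fun s hs => hE.1 s (by simp [hs]), geode_aux_nonneg_append_left hE.2⟩
    by_cases ha : 0 ≤ a
    · exact ⟨E', a, 0, hE', ha, by simp⟩
    · have ha1 : a = -1 := le_antisymm (by omega) (hE.1 a (by simp))
      have hne : E' ≠ [] := by
        rintro rfl
        have := hE.2 1
        simp [ha1] at this
      obtain ⟨P, n, k, hP, hn, heq⟩ := ih hE' hne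
      refine ⟨P, n, k + 1, hP, hn, ?_⟩
      rw [heq, ha1, List.replicate_succ']
      simp

/-- The map sending a pair `(P, n)`, where `P` is a nonnegative path with total sum `h`
and `n ≥ 0`, to `P ++ [n] ++ (h + n copies of -1)` is a bijection from
(nonnegative paths) × ℕ onto the set of nonempty excursions. -/
theorem geode_stmt14 :
    Set.BijOn
      (fun Pn : List ℤ × ℕ =>
        Pn.1 ++ [(Pn.2 : ℤ)] ++ List.replicate (Pn.1.sum + Pn.2).toNat (-1 : ℤ))
      ({P : List ℤ | NonnegPath P} ×ˢ (Set.univ : Set ℕ))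
      {E : List ℤ | Excursion E ∧ E ≠ []} := by
  refine ⟨?_, ?_, ?_⟩
  · -- MapsTo
    rintro ⟨P, n⟩ ⟨hP, -⟩
    simp only [Set.mem_setOf_eq] at hP ⊢
    have hPsum : 0 ≤ P.sum := by
      have := hP.2 P.length
      rwa [List.take_length] at this
    set k := (P.sum + n).toNat with hk
    have hkk : (k : ℤ) = P.sum + n := Int.toNat_of_nonneg (by positivity)
    refine ⟨⟨⟨?_, ?_⟩, ?_⟩, by simp⟩
    · intro s hs
      simp only [List.append_assoc, List.mem_append, List.mem_singleton,
        List.mem_replicate] at hs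
      rcases hs with h | h | h
      · exact hP.1 s h
      · rw [h]; omega
      · rw [h.2]
    · intro i
      rw [List.append_assoc, List.singleton_append]
      by_cases hi : i ≤ P.length
      · rw [List.take_append_of_le_length hi]
        exact hP.2 i
      · rw [List.take_append, List.sum_append,
          List.take_of_length_le (by omega)]
        have h2 : (((n:ℤ) :: List.replicate k (-1)).take (i - P.length)).sum =
            (n : ℤ) + ((List.replicate k (-1:ℤ)).take (i - P.length - 1)).sum := by
          obtain ⟨j, hj⟩ : ∃ j, i - P.length = j + 1 := ⟨i - P.length - 1, by omega⟩
          rw [hj]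
          simp [List.take_succ_cons]
        rw [h2, geode_aux_rep_take_sum]
        have : ((min (i - P.length - 1) k : ℕ) : ℤ) ≤ (k : ℤ) :=
          Nat.cast_le.mpr (min_le_right _ _)
        omega
    · rw [List.append_assoc, List.singleton_append]
      simp only [List.sum_append, List.sum_cons, List.sum_replicate, nsmul_eq_mul,
        mul_neg, mul_one]
      omega
  · -- InjOn
    rintro ⟨P, n⟩ ⟨hP, -⟩ ⟨Q, m⟩ ⟨hQ, -⟩ heq
    simp only [Set.mem_setOf_eq] at hP hQ
    simp only [List.append_assoc, List.singleton_append] at heq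
    obtain ⟨h1, h2, -⟩ := geode_aux_decomp_unique _ _ _ _ _ _
      (by positivity) (by positivity) heq
    have : n = m := by exact_mod_cast h2
    simp [Prod.ext_iff, h1, this]
  · -- SurjOn
    rintro E ⟨⟨hNN, hsum⟩, hne⟩
    obtain ⟨P, n, k, hP, hn, heq⟩ := geode_aux_decomp_exists E hNN hne
    refine ⟨(P, n.toNat), ⟨hP, trivial⟩, ?_⟩
    simp only [List.append_assoc, List.singleton_append]
    have hk : P.sum + n = k := by
      rw [heq] at hsum
      simp only [List.sum_append, List.sum_cons, List.sum_replicate, nsmul_eq_mul,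
        mul_neg, mul_one] at hsum
      omega
    have hn' : ((n.toNat : ℤ)) = n := Int.toNat_of_nonneg hn
    have hk' : (P.sum + n).toNat = k := by omega
    rw [heq, hn', hk']
end

section
/- Every nonnegative path P factors uniquely as P = E ++ Q where E is an excursion and Q is a positive path; conversely, any concatenation of an excursion and a positive path is a nonnegative path. -/
lemma pos_take_nonneg {Q : List ℤ} (hQ : PositivePath Q) (j : ℕ) :
    0 ≤ (Q.take j).sum := by
  rcases Nat.eq_zero_or_pos j with h | h
  · simp [h]
  rcases le_or_gt j Q.length with hj | hj
  · exact le_of_lt (hQ.2 j h hj)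
  · rw [List.take_of_length_le (le_of_lt hj)]
    rcases Q with _ | ⟨a, t⟩
    · simp
    · have hlen : 1 ≤ (a :: t).length := by simp
      have := hQ.2 _ hlen le_rfl
      rw [List.take_length] at this
      linarith

/-- Every nonnegative path `P` factors uniquely as `P = E ++ Q` with `E` an excursion
and `Q` a positive path; conversely, any concatenation of an excursion and a positive
path is a nonnegative path. -/
theorem geode_stmt15 :
    (∀ P : List ℤ, NonnegPath P →
      ∃! EQ : List ℤ × List ℤ, Excursion EQ.1 ∧ PositivePath EQ.2 ∧ P = EQ.1 ++ EQ.2) ∧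
    (∀ E Q : List ℤ, Excursion E → PositivePath Q → NonnegPath (E ++ Q)) := by
  constructor
  · intro P hP
    classical
    set p : ℕ → Prop := fun i => (P.take i).sum = 0 with hp
    have hp0 : p 0 := by simp [hp]
    set k : ℕ := Nat.findGreatest p P.length with hk
    have hpk : p k := Nat.findGreatest_spec (Nat.zero_le _) hp0
    have hmax : ∀ i, i ≤ P.length → p i → i ≤ k := fun i hi hpi =>
      Nat.le_findGreatest hi hpi
    have hkle : k ≤ P.length := Nat.findGreatest_le _
    refine ⟨(P.take k, P.drop k), ⟨⟨⟨?_, ?_⟩, hpk⟩, ⟨?_, ?_⟩, (List.take_append_drop k P).symm⟩, ?_⟩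
    · exact fun s hs => hP.1 s (List.mem_of_mem_take hs)
    · intro i
      rw [List.take_take]
      exact hP.2 _
    · exact fun s hs => hP.1 s (List.mem_of_mem_drop hs)
    · intro i hi hile
      have hsum : (P.take (k + i)).sum = (P.take k).sum + ((P.drop k).take i).sum := by
        rw [List.take_add, List.sum_append]
      have h0 : 0 ≤ (P.take (k + i)).sum := hP.2 _
      have hklen : k + i ≤ P.length := by
        have := hile
        rw [List.length_drop] at this
        omega
      rcases lt_or_eq_of_le h0 with h | h
      · rw [hsum, hpk, zero_add] at h
        exact h
      · exfalso
        have : k + i ≤ k := hmax _ hklen h.symm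
        omega
    · rintro ⟨E, Q⟩ ⟨hE, hQ, hPeq⟩
      simp only at hE hQ hPeq ⊢
      have hlE : E.length = k := by
        have hle1 : E.length ≤ k := by
          apply hmax
          · rw [hPeq]; simp
          · show (P.take E.length).sum = 0
            rw [hPeq, List.take_left]
            exact hE.2
        have hle2 : k ≤ E.length := by
          by_contra h
          push_neg at h
          obtain ⟨j, hjk⟩ : ∃ j, k = E.length + j := ⟨k - E.length, by omega⟩
          have hj : 1 ≤ j := by omega
          have hjl : j ≤ Q.length := by
            have := hkle
            rw [hPeq, List.length_append] at this
            omega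
          have hpos := hQ.2 _ hj hjl
          have hz : (P.take k).sum = 0 := hpk
          have : (P.take k).sum = E.sum + (Q.take j).sum := by
            rw [hPeq, hjk, List.take_add, List.take_left, List.sum_append, List.drop_left]
          rw [this, hE.2, zero_add] at hz
          omega
        omega
      have h1 : E = P.take k := by rw [hPeq, ← hlE, List.take_left]
      have h2 : Q = P.drop k := by rw [hPeq, ← hlE, List.drop_left]
      exact Prod.ext h1 h2
  · intro E Q hE hQ
    constructor
    · intro s hs
      rcases List.mem_append.1 hs with h | h
      · exact hE.1.1 s h
      · exact hQ.1 s h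
    · intro i
      rcases le_or_gt i E.length with h | h
      · rw [List.take_append_of_le_length h]
        exact hE.1.2 i
      · have : i = E.length + (i - E.length) := by omega
        rw [this, List.take_add, List.sum_append, List.take_left, hE.2, zero_add]
        rw [List.drop_left]
        exact pos_take_nonneg hQ _
end

section
/- (Lemma 3, Schützenberger's criterion.) Let α be a type and let M be a submonoid of the free monoid of lists over α under concatenation. Call an element of M irreducible if it is nonempty and is not the concatenation of two nonempty elements of M. Then the following are equivalent: (i) every element of M can be written in exactly one way as a concatenation of a (possibly empty) sequence of irreducible elements of M; (ii) for all lists p, q, r over α, if p ∈ M, p ++ q ∈ M, q ++ r ∈ M, and r ∈ M, then q ∈ M. -/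
/-- An element of a submonoid `M` of the free monoid of lists (under concatenation) is
irreducible if it is nonempty and is not the concatenation of two nonempty elements
of `M`. -/
def IrredIn {α : Type*} (M : Set (List α)) (l : List α) : Prop :=
  l ∈ M ∧ l ≠ [] ∧ ¬∃ a b : List α, a ∈ M ∧ b ∈ M ∧ a ≠ [] ∧ b ≠ [] ∧ l = a ++ b

private lemma flatten_mem_aux {α : Type*} (M : Set (List α)) (hone : ([] : List α) ∈ M)
    (hmul : ∀ a b : List α, a ∈ M → b ∈ M → a ++ b ∈ M) :
    ∀ L : List (List α), (∀ l ∈ L, l ∈ M) → L.flatten ∈ M := by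
  intro L hL
  induction L with
  | nil => simpa using hone
  | cons a L ih =>
      simp only [List.flatten_cons]
      exact hmul _ _ (hL a (by simp)) (ih fun l hl => hL l (by simp [hl]))

private lemma exists_fact_aux {α : Type*} (M : Set (List α)) :
    ∀ n : ℕ, ∀ x : List α, x.length ≤ n → x ∈ M →
      ∃ L : List (List α), (∀ l ∈ L, IrredIn M l) ∧ L.flatten = x := by
  intro n
  induction n with
  | zero =>
      intro x hx _
      have : x = [] := List.length_eq_zero_iff.mp (Nat.le_zero.mp hx)
      exact ⟨[], by simp, by simp [this]⟩
  | succ n ih =>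
      intro x hx hxM
      rcases eq_or_ne x [] with rfl | hne
      · exact ⟨[], by simp, by simp⟩
      by_cases hirr : IrredIn M x
      · exact ⟨[x], by simpa using hirr, by simp⟩
      · have : ∃ a b : List α, a ∈ M ∧ b ∈ M ∧ a ≠ [] ∧ b ≠ [] ∧ x = a ++ b := by
          by_contra h
          exact hirr ⟨hxM, hne, h⟩
        obtain ⟨a, b, haM, hbM, ha, hb, rfl⟩ := this
        have hal : a.length ≤ n := by
          have := List.length_pos_iff.mpr hb
          simp only [List.length_append] at hx
          omega
        have hbl : b.length ≤ n := by
          have := List.length_pos_iff.mpr ha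
          simp only [List.length_append] at hx
          omega
        obtain ⟨La, hLa, hfa⟩ := ih a hal haM
        obtain ⟨Lb, hLb, hfb⟩ := ih b hbl hbM
        refine ⟨La ++ Lb, ?_, by simp [hfa, hfb]⟩
        intro l hl
        rcases List.mem_append.mp hl with h | h
        · exact hLa l h
        · exact hLb l h

private lemma uniq_fact_aux {α : Type*} (M : Set (List α)) (hone : ([] : List α) ∈ M)
    (hmul : ∀ a b : List α, a ∈ M → b ∈ M → a ++ b ∈ M)
    (hS : ∀ p q r : List α, p ∈ M → p ++ q ∈ M → q ++ r ∈ M → r ∈ M → q ∈ M) :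
    ∀ L1 L2 : List (List α), (∀ l ∈ L1, IrredIn M l) → (∀ l ∈ L2, IrredIn M l) →
      L1.flatten = L2.flatten → L1 = L2 := by
  intro L1
  induction L1 with
  | nil =>
      intro L2 _ hL2 hf
      cases L2 with
      | nil => rfl
      | cons b L2' =>
          exfalso
          simp only [List.flatten_nil, List.flatten_cons] at hf
          have hb := (hL2 b (by simp)).2.1
          exact hb (List.append_eq_nil_iff.mp hf.symm).1
  | cons a L1' ih =>
      intro L2 hL1 hL2 hf
      cases L2 with
      | nil =>
          exfalso
          simp only [List.flatten_nil, List.flatten_cons] at hf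
          exact (hL1 a (by simp)).2.1 (List.append_eq_nil_iff.mp hf).1
      | cons b L2' =>
          simp only [List.flatten_cons] at hf
          have hflat1 : L1'.flatten ∈ M :=
            flatten_mem_aux M hone hmul _ (fun l hl => (hL1 l (by simp [hl])).1)
          have hflat2 : L2'.flatten ∈ M :=
            flatten_mem_aux M hone hmul _ (fun l hl => (hL2 l (by simp [hl])).1)
          have haM := (hL1 a (by simp)).1
          have hbM := (hL2 b (by simp)).1
          have hab : a = b := by
            rcases List.append_eq_append_iff.mp hf with ⟨s, hb', hs⟩ | ⟨s, ha', hs⟩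
            · -- b = a ++ s, L1'.flatten = s ++ L2'.flatten
              have hsM : s ∈ M := by
                apply hS a s L2'.flatten haM (hb' ▸ hbM) (hs ▸ hflat1) hflat2
              have hs0 : s = [] := by
                by_contra hsne
                exact (hL2 b (by simp)).2.2
                  ⟨a, s, haM, hsM, (hL1 a (by simp)).2.1, hsne, hb'⟩
              simp [hb', hs0]
            · -- a = b ++ s, L2'.flatten = s ++ L1'.flatten
              have hsM : s ∈ M := by
                apply hS b s L1'.flatten hbM (ha' ▸ haM) (hs ▸ hflat2) hflat1
              have hs0 : s = [] := by
                by_contra hsne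
                exact (hL1 a (by simp)).2.2
                  ⟨b, s, hbM, hsM, (hL2 b (by simp)).2.1, hsne, ha'⟩
              simp [ha', hs0]
          subst hab
          have hff : L1'.flatten = L2'.flatten := by
            exact List.append_cancel_left hf
          have := ih L2' (fun l hl => hL1 l (by simp [hl]))
            (fun l hl => hL2 l (by simp [hl])) hff
          rw [this]

/-- (Lemma 3, Schützenberger's criterion.) Let `M` be a submonoid of the free monoid of
lists over `α` under concatenation. Then every element of `M` has a unique factorization
into irreducible elements of `M` if and only if, for all lists `p, q, r`, whenever `p`,
`p ++ q`, `q ++ r`, and `r` are in `M`, so is `q`. -/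
theorem geode_stmt16 {α : Type*} (M : Set (List α)) (hone : ([] : List α) ∈ M)
    (hmul : ∀ a b : List α, a ∈ M → b ∈ M → a ++ b ∈ M) :
    (∀ x ∈ M, ∃! L : List (List α), (∀ l ∈ L, IrredIn M l) ∧ L.flatten = x) ↔
      (∀ p q r : List α, p ∈ M → p ++ q ∈ M → q ++ r ∈ M → r ∈ M → q ∈ M) := by
  constructor
  · intro huniq p q r hp hpq hqr hr
    obtain ⟨Lp, hLp, hfp⟩ := exists_fact_aux M p.length p le_rfl hp
    obtain ⟨Lpq, hLpq, hfpq⟩ := exists_fact_aux M _ (p ++ q) le_rfl hpq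
    obtain ⟨Lqr, hLqr, hfqr⟩ := exists_fact_aux M _ (q ++ r) le_rfl hqr
    obtain ⟨Lr, hLr, hfr⟩ := exists_fact_aux M r.length r le_rfl hr
    have hpqr : p ++ q ++ r ∈ M := hmul _ _ hpq hr
    obtain ⟨L, _, hLuniq⟩ := huniq (p ++ q ++ r) hpqr
    have h1 : Lp ++ Lqr = L := by
      apply hLuniq
      refine ⟨?_, by simp [hfp, hfqr]⟩
      intro l hl
      rcases List.mem_append.mp hl with h | h
      exacts [hLp l h, hLqr l h]
    have h2 : Lpq ++ Lr = L := by
      apply hLuniq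
      refine ⟨?_, by simp [hfpq, hfr]⟩
      intro l hl
      rcases List.mem_append.mp hl with h | h
      exacts [hLpq l h, hLr l h]
    have heq : Lp ++ Lqr = Lpq ++ Lr := h1.trans h2.symm
    rcases List.append_eq_append_iff.mp heq with ⟨T, hT1, hT2⟩ | ⟨T, hT1, hT2⟩
    · -- Lpq = Lp ++ T
      have : p ++ T.flatten = p ++ q := by
        rw [← hfpq, hT1, List.flatten_append, hfp]
      have hq : q = T.flatten := (List.append_cancel_left this).symm
      rw [hq]
      apply flatten_mem_aux M hone hmul
      intro l hl
      exact (hLpq l (hT1 ▸ List.mem_append.mpr (Or.inr hl))).1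
    · -- Lp = Lpq ++ T
      have : p ++ q ++ T.flatten = p := by
        conv_rhs => rw [← hfp]
        rw [hT1, List.flatten_append, hfpq]
      have : q = [] := by
        have hlen := congrArg List.length this
        simp only [List.length_append] at hlen
        exact List.length_eq_zero_iff.mp (by omega)
      rw [this]; exact hone
  · intro hS x hx
    obtain ⟨L, hL⟩ := exists_fact_aux M x.length x le_rfl hx
    refine ⟨L, hL, fun L' hL' => ?_⟩
    exact uniq_fact_aux M hone hmul hS L' L hL'.1 hL.1 (hL'.2.trans hL.2.symm)
end

section
/- Define an arch to be a nonempty excursion (s_1,…,s_k) such that s_1+⋯+s_i > 0 for all 1 ≤ i < k. Then every excursion can be written in exactly one way as a concatenation of a (possibly empty) sequence of arches. -/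
/-- An arch: a nonempty excursion all of whose proper nonempty prefix sums are > 0. -/
def Arch (P : List ℤ) : Prop :=
  Excursion P ∧ P ≠ [] ∧ ∀ i : ℕ, 1 ≤ i → i < P.length → 0 < (P.take i).sum

lemma arch_prefix_eq {A B X Y : List ℤ} (hA : Arch A) (hB : Arch B)
    (h : A ++ X = B ++ Y) (hle : A.length ≤ B.length) : A = B := by
  have htake : B.take A.length = A := by
    have h1 : (A ++ X).take A.length = A := by simp
    have h2 : (B ++ Y).take A.length = B.take A.length := by
      rw [List.take_append, Nat.sub_eq_zero_of_le hle]
      simp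
    rw [h, h2] at h1
    exact h1
  rcases lt_or_eq_of_le hle with hlt | heq
  · exfalso
    have h1 : 1 ≤ A.length := by
      have := hA.2.1
      cases A with
      | nil => simp at this
      | cons a t => simp
    have := hB.2.2 A.length h1 hlt
    rw [htake, hA.1.2] at this
    exact lt_irrefl _ this
  · rw [← htake, heq, List.take_length]

lemma decomp_unique : ∀ (L1 L2 : List (List ℤ)), (∀ A ∈ L1, Arch A) → (∀ A ∈ L2, Arch A) →
    L1.flatten = L2.flatten → L1 = L2 := by
  intro L1
  induction L1 with
  | nil =>
    intro L2 _ h2 hf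
    cases L2 with
    | nil => rfl
    | cons B S =>
      exfalso
      have hB := (h2 B (by simp)).2.1
      simp at hf
      exact hB hf.1
  | cons A T ih =>
    intro L2 h1 h2 hf
    cases L2 with
    | nil =>
      exfalso
      have hA := (h1 A (by simp)).2.1
      simp at hf
      exact hA hf.1
    | cons B S =>
      have hA := h1 A (by simp)
      have hB := h2 B (by simp)
      simp only [List.flatten_cons] at hf
      have hAB : A = B := by
        rcases le_total A.length B.length with hle | hle
        · exact arch_prefix_eq hA hB hf hle
        · exact (arch_prefix_eq hB hA hf.symm hle).symm
      subst hAB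
      have hTS : T.flatten = S.flatten := by
        exact List.append_cancel_left hf
      have := ih S (fun C hC => h1 C (by simp [hC])) (fun C hC => h2 C (by simp [hC])) hTS
      rw [this]

lemma exists_decomp : ∀ n (E : List ℤ), E.length ≤ n → Excursion E →
    ∃ L : List (List ℤ), (∀ A ∈ L, Arch A) ∧ L.flatten = E := by
  intro n
  induction n with
  | zero =>
    intro E hlen _
    have : E = [] := List.length_eq_zero_iff.mp (Nat.le_zero.mp hlen)
    exact ⟨[], by simp, by simp [this]⟩
  | succ n ih =>
    intro E hlen hE
    rcases eq_or_ne E [] with rfl | hne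
    · exact ⟨[], by simp, by simp⟩
    have hlen1 : 1 ≤ E.length := by
      cases E with
      | nil => exact absurd rfl hne
      | cons a t => simp
    have hex : ∃ j, 1 ≤ j ∧ (E.take j).sum = 0 :=
      ⟨E.length, hlen1, by rw [List.take_length]; exact hE.2⟩
    set i := Nat.find hex with hi
    obtain ⟨hi1, hisum⟩ := Nat.find_spec hex
    have hiE : i ≤ E.length := Nat.find_min' hex ⟨hlen1, by rw [List.take_length]; exact hE.2⟩
    set A := E.take i with hAdef
    set R := E.drop i with hRdef
    have hArch : Arch A := by
      refine ⟨⟨⟨fun s hs => hE.1.1 s (List.mem_of_mem_take hs), fun j => by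
        rw [hAdef, List.take_take]
        rcases le_total j i with h | h
        · rw [min_eq_left h]; exact hE.1.2 j
        · rw [min_eq_right h]; exact hE.1.2 i⟩, hisum⟩, ?_, ?_⟩
      · rw [hAdef, ← List.length_pos_iff, List.length_take]
        exact lt_min hi1 hlen1
      · intro k hk1 hk2
        have hklen : A.length = i := by rw [hAdef, List.length_take, min_eq_left hiE]
        rw [hklen] at hk2
        have hsum : (A.take k).sum = (E.take k).sum := by
          rw [hAdef, List.take_take, min_eq_left (le_of_lt hk2)]
        rw [hsum]
        rcases lt_or_eq_of_le (hE.1.2 k) with h | h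
        · exact h
        · exact absurd ⟨hk1, h.symm⟩ (Nat.find_min hex hk2)
    have hRex : Excursion R := by
      refine ⟨⟨fun s hs => hE.1.1 s (List.mem_of_mem_drop hs), fun j => ?_⟩, ?_⟩
      · have : E.take (i + j) = A ++ R.take j := by
          rw [hAdef, hRdef, List.take_add]
        have h2 := hE.1.2 (i + j)
        rw [this, List.sum_append, hisum, zero_add] at h2
        exact h2
      · have : A ++ R = E := List.take_append_drop i E
        have h2 := hE.2
        rw [← this, List.sum_append, hisum, zero_add] at h2
        exact h2
    have hRlen : R.length ≤ n := by
      rw [hRdef, List.length_drop]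
      omega
    obtain ⟨L, hL, hLf⟩ := ih R hRlen hRex
    exact ⟨A :: L, by
      intro C hC
      rcases List.mem_cons.mp hC with rfl | hC
      · exact hArch
      · exact hL C hC, by
      simp only [List.flatten_cons, hLf]
      exact List.take_append_drop i E⟩

/-- Every excursion can be written in exactly one way as a concatenation of a (possibly
empty) sequence of arches. -/
theorem geode_stmt17 :
    ∀ E : List ℤ, Excursion E →
      ∃! L : List (List ℤ), (∀ A ∈ L, Arch A) ∧ L.flatten = E := by
  intro E hE
  obtain ⟨L, hL, hLf⟩ := exists_decomp E.length E le_rfl hE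
  exact ⟨L, ⟨hL, hLf⟩, fun L' ⟨h1, h2⟩ => decomp_unique L' L h1 hL (by rw [h2, hLf])⟩
end

section
/- Call a nonnegative path irreducible if it is nonempty and is not the concatenation of two nonempty nonnegative paths. A path P is an irreducible nonnegative path if and only if there exist an integer n ≥ 0, an integer j with 0 ≤ j ≤ n, and excursions E_1, …, E_{n−j} such that P = [n] ++ E_1 ++ [−1] ++ E_2 ++ [−1] ++ ⋯ ++ E_{n−j} ++ [−1] (just P = [n] when j = n); moreover n, j, and the excursions E_1, …, E_{n−j} are uniquely determined by P. -/
/-- An irreducible nonnegative path: a nonempty nonnegative path that is not the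
concatenation of two nonempty nonnegative paths. -/
def IrredNonnegPath (P : List ℤ) : Prop :=
  NonnegPath P ∧ P ≠ [] ∧
    ¬∃ A B : List ℤ, NonnegPath A ∧ NonnegPath B ∧ A ≠ [] ∧ B ≠ [] ∧ P = A ++ B

lemma nonneg_iff (P : List ℤ) :
    NonnegPath P ↔ IsPath P ∧ ∀ A, A <+: P → 0 ≤ A.sum := by
  constructor
  · rintro ⟨h1, h2⟩
    refine ⟨h1, fun A hA => ?_⟩
    rw [List.prefix_iff_eq_take.mp hA]
    exact h2 _
  · rintro ⟨h1, h2⟩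
    exact ⟨h1, fun i => h2 _ (List.take_prefix i P)⟩

lemma prefix_nonneg {A P : List ℤ} (hA : A <+: P) (hP : NonnegPath P) :
    NonnegPath A := by
  rw [nonneg_iff] at hP ⊢
  exact ⟨fun s hs => hP.1 s (hA.subset hs), fun B hB => hP.2 B (hB.trans hA)⟩

lemma irred_single (n : ℕ) : IrredNonnegPath [(n : ℤ)] := by
  refine ⟨⟨fun s hs => by simp at hs; omega, fun i => ?_⟩, by simp, ?_⟩
  · match i with
    | 0 => simp
    | (k+1) => simp
  · rintro ⟨A, B, _, _, hA, hB, hAB⟩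
    rcases A with _ | ⟨a, A⟩ <;> rcases B with _ | ⟨b, B⟩ <;> simp_all

lemma irred_step (E R : List ℤ) (m : ℕ) (hE : Excursion E)
    (h : IrredNonnegPath ((m : ℤ) :: R)) :
    IrredNonnegPath (((m : ℤ) + 1) :: (E ++ (-1 :: R))) := by
  obtain ⟨hEn, hEs⟩ := hE
  obtain ⟨hRn, -, hRi⟩ := h
  have hEpre : ∀ A, A <+: E → 0 ≤ A.sum := ((nonneg_iff E).mp hEn).2
  refine ⟨?_, by simp, ?_⟩
  · rw [nonneg_iff]
    constructor
    · intro s hs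
      simp only [List.mem_cons, List.mem_append] at hs
      rcases hs with h | h | h | h
      · omega
      · exact hEn.1 s h
      · omega
      · exact hRn.1 s (List.mem_cons_of_mem _ h)
    · intro A hA
      rcases A with _ | ⟨a, A⟩
      · simp
      · obtain ⟨t, ht⟩ := hA
        simp only [List.cons_append] at ht
        injection ht with hh ht
        rcases List.append_eq_append_iff.mp ht with ⟨a', ha1, ha2⟩ | ⟨c, hc1, hc2⟩
        · -- E = A ++ a'
          have := hEpre A ⟨a', ha1.symm⟩
          simp; omega
        · -- A = E ++ c, -1 :: R = c ++ t
          rcases c with _ | ⟨c0, c⟩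
          · simp at hc1; subst hc1; simp [hEs]; omega
          · simp only [List.cons_append] at hc2
            injection hc2 with hh1 hh2
            subst hc1
            have hmc : 0 ≤ ((m : ℤ) :: c).sum := by
              refine ((nonneg_iff _).mp hRn).2 _ ?_
              exact List.cons_prefix_cons.mpr ⟨rfl, ⟨t, hh2.symm⟩⟩
            simp at hmc ⊢
            omega
  · rintro ⟨A, B, hAn, hBn, hAne, hBne, hAB⟩
    rcases A with _ | ⟨a, A⟩
    · exact hAne rfl
    simp only [List.cons_append] at hAB
    injection hAB with h1 h2
    rcases List.append_eq_append_iff.mp h2 with ⟨a', ha1, ha2⟩ | ⟨c, hc1, hc2⟩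
    · -- A = E ++ a', -1 :: R = a' ++ B
      rcases a' with _ | ⟨c0, c⟩
      · simp at ha2
        have := hBn.2 1
        rw [← ha2] at this
        simp at this
      · simp only [List.cons_append] at ha2
        injection ha2 with hh1 hh2
        apply hRi
        refine ⟨(m : ℤ) :: c, B, ?_, hBn, by simp, hBne, by rw [hh2, List.cons_append]⟩
        apply prefix_nonneg _ hRn
        exact List.cons_prefix_cons.mpr ⟨rfl, ⟨B, hh2.symm⟩⟩
    · -- E = A ++ c, B = c ++ (-1 :: R)
      have hApre : 0 ≤ A.sum := hEpre A ⟨c, hc1.symm⟩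
      have hsum : A.sum + c.sum = E.sum := by rw [hc1]; simp
      have hpos : 0 ≤ (B.take (c.length + 1)).sum := hBn.2 _
      have htk : B.take (c.length + 1) = c ++ [(-1 : ℤ)] := by
        rw [hc2, List.take_append,
          List.take_of_length_le (Nat.le_succ _), Nat.add_sub_cancel_left]
        simp
      rw [htk] at hpos
      simp at hpos
      omega

lemma nonneg_single {s : ℤ} (hs : 0 ≤ s) : NonnegPath [s] := by
  refine ⟨fun x hx => by simp at hx; omega, fun i => ?_⟩
  match i with
  | 0 => simp
  | (k+1) => simpa using hs

lemma decomp_irred (L : List (List ℤ)) (n : ℕ) (hL : ∀ E ∈ L, Excursion E)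
    (hlen : L.length ≤ n) :
    IrredNonnegPath ((n : ℤ) :: (L.map (fun E => E ++ [(-1 : ℤ)])).flatten) := by
  induction L generalizing n with
  | nil => simpa using irred_single n
  | cons E L ih =>
    obtain ⟨m, rfl⟩ : ∃ m, n = m + 1 := by
      simp at hlen; exact ⟨n - 1, by omega⟩
    have : ((E :: L).map (fun E => E ++ [(-1 : ℤ)])).flatten
        = E ++ (-1 :: (L.map (fun E => E ++ [(-1 : ℤ)])).flatten) := by
      simp
    rw [this]
    have hcast : ((m + 1 : ℕ) : ℤ) = (m : ℤ) + 1 := by push_cast; ring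
    rw [hcast]
    exact irred_step _ _ m (hL E (by simp))
      (ih m (fun F hF => hL F (List.mem_cons_of_mem _ hF)) (by simp at hlen; omega))

lemma exc_not_lt {E E' a b : List ℤ} (hE : Excursion E) (hE' : NonnegPath E')
    (h : E ++ (-1 : ℤ) :: a = E' ++ (-1 : ℤ) :: b) : ¬ E.length < E'.length := by
  intro hlt
  have htk : E'.take (E.length + 1) = E ++ [(-1 : ℤ)] := by
    have h1 : (E' ++ (-1 : ℤ) :: b).take (E.length + 1) = E'.take (E.length + 1) := by
      rw [List.take_append]
      have : E.length + 1 - E'.length = 0 := by omega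
      simp [this]
    have h2 : (E ++ (-1 : ℤ) :: a).take (E.length + 1) = E ++ [(-1 : ℤ)] := by
      rw [List.take_append,
        List.take_of_length_le (Nat.le_succ _), Nat.add_sub_cancel_left]
      simp
    rw [← h1, ← h, h2]
  have := hE'.2 (E.length + 1)
  rw [htk] at this
  simp [hE.2] at this

lemma flatten_inj : ∀ L L' : List (List ℤ), (∀ E ∈ L, Excursion E) →
    (∀ E ∈ L', Excursion E) →
    (L.map (fun E => E ++ [(-1 : ℤ)])).flatten = (L'.map (fun E => E ++ [(-1 : ℤ)])).flatten →
    L = L'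
  | [], [], _, _, _ => rfl
  | [], E' :: L', _, _, h => by simp at h
  | E :: L, [], _, _, h => by simp at h
  | E :: L, E' :: L', hL, hL', h => by
    simp only [List.map_cons, List.flatten_cons, List.append_assoc, List.singleton_append] at h
    have hE : Excursion E := hL E (by simp)
    have hE' : Excursion E' := hL' E' (by simp)
    have hlen : E.length = E'.length := by
      have h1 := exc_not_lt hE hE'.1 h
      have h2 := exc_not_lt hE' hE.1 h.symm
      omega
    obtain ⟨he, ht⟩ := List.append_inj h hlen
    injection ht with _ ht
    have := flatten_inj L L' (fun F hF => hL F (by simp [hF]))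
      (fun F hF => hL' F (by simp [hF])) ht
    rw [he, this]

lemma exists_decomp_s18 : ∀ (N : ℕ) (P : List ℤ), P.length ≤ N → IrredNonnegPath P →
    ∃ (n : ℕ) (L : List (List ℤ)), L.length ≤ n ∧ (∀ E ∈ L, Excursion E) ∧
      P = (n : ℤ) :: (L.map (fun E => E ++ [(-1 : ℤ)])).flatten
  | 0, P, hN, hP => by
    rcases P with _ | _
    · exact absurd rfl hP.2.1
    · simp at hN
  | (N + 1), P, hN, hP => by
    obtain ⟨hPn, hPne, hPi⟩ := hP
    rcases P with _ | ⟨s, T⟩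
    · exact absurd rfl hPne
    have hs : 0 ≤ s := by have := hPn.2 1; simpa using this
    rcases eq_or_ne T [] with rfl | hT
    · exact ⟨s.toNat, [], by simp, by simp, by simp [Int.toNat_of_nonneg hs]⟩
    -- T is not a nonneg path
    have hTpath : IsPath T := fun x hx => hPn.1 x (List.mem_cons_of_mem _ hx)
    have hTnn : ¬ NonnegPath T := by
      intro hTn
      exact hPi ⟨[s], T, nonneg_single hs, hTn, by simp, hT, rfl⟩
    have hex : ∃ i, (T.take i).sum < 0 := by
      by_contra hc
      push_neg at hc
      exact hTnn ⟨hTpath, hc⟩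
    classical
    set i := Nat.find hex with hi
    have hisum : (T.take i).sum < 0 := Nat.find_spec hex
    have hmin : ∀ j < i, 0 ≤ (T.take j).sum := fun j hj => by
      have := Nat.find_min hex hj; omega
    obtain ⟨k, hk⟩ : ∃ k, i = k + 1 := by
      rcases Nat.eq_zero_or_pos i with h0 | h0
      · rw [h0] at hisum; simp at hisum
      · exact ⟨i - 1, by omega⟩
    have hkT : k < T.length := by
      by_contra hc
      push_neg at hc
      have e1 : T.take k = T := List.take_of_length_le hc
      have e2 : T.take i = T := List.take_of_length_le (by omega)
      have := hmin k (by omega)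
      rw [e1] at this; rw [e2] at hisum; omega
    have htk1 : T.take (k + 1) = T.take k ++ [T[k]] := (List.take_concat_get' T k hkT).symm
    have hxk : (-1 : ℤ) ≤ T[k] := hTpath _ (List.getElem_mem hkT)
    have hksum : 0 ≤ (T.take k).sum := hmin k (by omega)
    have hsum1 : (T.take k).sum + T[k] < 0 := by
      rw [hk, htk1] at hisum
      simpa only [List.sum_append, List.sum_cons, List.sum_nil, add_zero] using hisum
    have hEsum : (T.take k).sum = 0 := by omega
    have hxkeq : T[k] = -1 := by omega
    -- the excursion E
    set E := T.take k with hEdef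
    have hEexc : Excursion E := by
      refine ⟨⟨fun x hx => hTpath x (List.mem_of_mem_take hx), fun j => ?_⟩, hEsum⟩
      rw [hEdef, List.take_take]
      exact hmin _ (by omega)
    set D := T.drop (k + 1) with hDdef
    have hTsplit : T = E ++ (-1 : ℤ) :: D := by
      conv_lhs => rw [← List.take_append_drop k T]
      rw [List.drop_eq_getElem_cons hkT, hxkeq]
    -- s ≥ 1
    have hs1 : 1 ≤ s := by
      have := hPn.2 (k + 2)
      have e : (s :: T).take (k + 2) = s :: T.take (k + 1) := by simp
      rw [e] at this
      rw [hk] at hisum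
      simp at this
      omega
    -- P' is an irreducible nonneg path
    have hP'pre : ∀ A', A' <+: D → s :: (E ++ (-1 : ℤ) :: A') <+: s :: T := by
      intro A' ⟨t, ht⟩
      refine ⟨t, ?_⟩
      rw [hTsplit, ← ht]
      simp
    have hP' : IrredNonnegPath ((s - 1) :: D) := by
      refine ⟨?_, by simp, ?_⟩
      · rw [nonneg_iff]
        constructor
        · intro x hx
          rcases List.mem_cons.mp hx with rfl | hx
          · omega
          · exact hTpath x (List.mem_of_mem_drop hx)
        · intro A hA
          rcases A with _ | ⟨a, A'⟩
          · simp
          obtain ⟨t, ht⟩ := hA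
          simp only [List.cons_append] at ht
          injection ht with ha ht
          have := ((nonneg_iff _).mp hPn).2 _ (hP'pre A' ⟨t, ht⟩)
          simp [hEsum] at this ⊢
          omega
      · rintro ⟨A, B, hAn, hBn, hAne, hBne, hAB⟩
        rcases A with _ | ⟨a, A'⟩
        · exact hAne rfl
        simp only [List.cons_append] at hAB
        injection hAB with ha hD
        apply hPi
        refine ⟨s :: (E ++ (-1 : ℤ) :: A'), B, ?_, hBn, by simp, hBne, ?_⟩
        · exact prefix_nonneg (hP'pre A' ⟨B, hD.symm⟩) hPn
        · rw [hTsplit, hD]; simp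
    -- apply induction
    have hlen : ((s - 1) :: D).length ≤ N := by
      have h1 : (s :: T).length ≤ N + 1 := hN
      have h2 : T.length = E.length + 1 + D.length := by rw [hTsplit]; simp; omega
      simp at h1 ⊢
      omega
    obtain ⟨n', L', hlen', hexc', heq'⟩ := exists_decomp_s18 N ((s - 1) :: D) hlen hP'
    injection heq' with hn' hD'
    refine ⟨n' + 1, E :: L', by simpa using hlen', ?_, ?_⟩
    · intro F hF
      rcases List.mem_cons.mp hF with rfl | hF
      · exact hEexc
      · exact hexc' F hF
    · rw [hTsplit, hD']
      have : ((n' + 1 : ℕ) : ℤ) = s := by push_cast; omega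
      rw [this]
      simp

/-- A path `P` is an irreducible nonnegative path if and only if there are `n ≥ 0`,
`0 ≤ j ≤ n`, and excursions `E₁, …, E_{n-j}` (uniquely determined by `P`) with
`P = [n] ++ E₁ ++ [-1] ++ E₂ ++ [-1] ++ ⋯ ++ E_{n-j} ++ [-1]` (just `P = [n]`
when `j = n`). -/
theorem geode_stmt18 (P : List ℤ) :
    IrredNonnegPath P ↔
      ∃! njL : ℕ × ℕ × List (List ℤ),
        njL.2.1 ≤ njL.1 ∧ njL.2.2.length = njL.1 - njL.2.1 ∧
        (∀ E ∈ njL.2.2, Excursion E) ∧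
        P = (njL.1 : ℤ) :: (njL.2.2.map (fun E => E ++ [(-1 : ℤ)])).flatten := by
  constructor
  · intro h
    obtain ⟨n, L, hlen, hexc, hP⟩ := exists_decomp_s18 P.length P le_rfl h
    refine ⟨(n, n - L.length, L),
      ⟨Nat.sub_le _ _, show L.length = n - (n - L.length) by omega, hexc, hP⟩, ?_⟩
    rintro ⟨n₂, j₂, L₂⟩ ⟨h1, h2, h3, h4⟩
    dsimp only at h1 h2 h3 h4
    rw [hP] at h4
    injection h4 with e1 e2
    have hn : n = n₂ := by exact_mod_cast e1
    have hL : L = L₂ := flatten_inj L L₂ hexc h3 e2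
    subst hn hL
    have hj : j₂ = n - L.length := by omega
    rw [hj]
  · rintro ⟨⟨n, j, L⟩, ⟨h1, h2, h3, h4⟩, -⟩
    dsimp only at h1 h2 h3 h4
    rw [h4]
    exact decomp_irred L n h3 (by omega)
end

section
/- (Wiener–Hopf factorization.) Every finite list P of integers factors uniquely as P = A ++ B, where A is a list all of whose nonempty suffix sums are < 0 (a reverse-positive path) and B is a list all of whose prefix sums are ≥ 0 (a nonnegative path); the cut point is the first point at which the sequence of partial sums of P attains its minimum. -/
/-! The cut point `k` is the first index minimising `i ↦ (P.take i).sum`. Strict minimality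
before `k` says exactly that every nonempty suffix of `P.take k` has negative sum, and
minimality after `k` that every prefix of `P.drop k` has nonnegative sum. Conversely, for any
such factorisation `A ++ B` the prefix sums of `A ++ B` are minimised at `A.length`, and strictly
above that minimum before it, so two factorisations have the same cut point. -/

theorem Nat.exists_first_min {α : Type*} [LinearOrder α] {f : ℕ → α}
    (h : ∃ n, ∀ j, f n ≤ f j) : ∃ k, (∀ j, f k ≤ f j) ∧ ∀ i < k, f k < f i := by
  classical
  refine ⟨Nat.find h, Nat.find_spec h, fun i hi => ?_⟩
  obtain ⟨j, hj⟩ : ∃ j, f j < f i := by simpa using Nat.find_min h hi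
  exact (Nat.find_spec h j).trans_lt hj

namespace List

theorem exists_forall_sum_take_le {α : Type*} [AddMonoid α] [LinearOrder α] (P : List α) :
    ∃ n, ∀ j, (P.take n).sum ≤ (P.take j).sum := by
  obtain ⟨n, -, hn⟩ := (Finset.range (P.length + 1)).exists_min_image
    (fun i => (P.take i).sum) ⟨0, by simp⟩
  refine ⟨n, fun j => ?_⟩
  rw [take_eq_take_min (i := j)]
  exact hn _ (Finset.mem_range.mpr (Nat.lt_succ_of_le (min_le_right _ _)))

variable {α : Type*} [AddCommGroup α] [LinearOrder α] [IsOrderedAddMonoid α]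

def IsReversePositive (A : List α) : Prop := ∀ i < A.length, (A.drop i).sum < 0

def IsNonnegative (B : List α) : Prop := ∀ i, 0 ≤ (B.take i).sum

theorem isReversePositive_take {P : List α} {k : ℕ}
    (hk : ∀ i < k, (P.take k).sum < (P.take i).sum) : (P.take k).IsReversePositive := by
  intro i hi
  have hik : i < k := hi.trans_le (length_take_le k P)
  have hsplit := sum_take_add_sum_drop (P.take k) i
  rw [take_take, min_eq_left hik.le] at hsplit
  rw [eq_sub_of_add_eq' hsplit, sub_neg]
  exact hk i hik

theorem isNonnegative_drop {P : List α} {k : ℕ}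
    (hk : ∀ j, (P.take k).sum ≤ (P.take j).sum) : (P.drop k).IsNonnegative := by
  intro i
  have hmin := hk (k + i)
  rw [take_add, sum_append] at hmin
  exact (le_add_iff_nonneg_right _).mp hmin

theorem IsReversePositive.sum_lt_sum_take {A : List α} (hA : A.IsReversePositive) {i : ℕ}
    (hi : i < A.length) : A.sum < (A.take i).sum := by
  conv_lhs => rw [← sum_take_add_sum_drop A i]
  exact add_lt_of_neg_right _ (hA i hi)

theorem IsReversePositive.sum_le_sum_take {A : List α} (hA : A.IsReversePositive) (i : ℕ) :
    A.sum ≤ (A.take i).sum := by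
  rcases lt_or_ge i A.length with hi | hi
  · exact (hA.sum_lt_sum_take hi).le
  · rw [take_of_length_le hi]

theorem sum_le_sum_take_append {A B : List α} (hA : A.IsReversePositive)
    (hB : B.IsNonnegative) (i : ℕ) : A.sum ≤ ((A ++ B).take i).sum := by
  rw [take_append, sum_append]
  exact le_add_of_le_of_nonneg (hA.sum_le_sum_take i) (hB _)

theorem sum_lt_sum_take_append {A : List α} (B : List α) (hA : A.IsReversePositive) {i : ℕ}
    (hi : i < A.length) : A.sum < ((A ++ B).take i).sum := by
  rw [take_append_of_le_length hi.le]
  exact hA.sum_lt_sum_take hi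

theorem length_le_of_append_eq_append {A B A' B' : List α} (hA : A.IsReversePositive)
    (hA' : A'.IsReversePositive) (hB' : B'.IsNonnegative) (h : A ++ B = A' ++ B') :
    A.length ≤ A'.length := by
  by_contra! hlen
  have hle := sum_le_sum_take_append hA' hB' A.length
  have hlt := sum_lt_sum_take_append B hA hlen
  rw [← h, take_left] at hle
  rw [h, take_left] at hlt
  exact hle.not_gt hlt

theorem eq_of_append_eq_append_of_isReversePositive_of_isNonnegative {A B A' B' : List α}
    (hA : A.IsReversePositive) (hB : B.IsNonnegative)
    (hA' : A'.IsReversePositive) (hB' : B'.IsNonnegative) (h : A ++ B = A' ++ B') :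
    A = A' ∧ B = B' :=
  append_inj h <| le_antisymm (length_le_of_append_eq_append hA hA' hB' h)
    (length_le_of_append_eq_append hA' hA hB h.symm)

end List

/-- (Wiener–Hopf factorization.) Every finite list `P` of integers factors uniquely as
`P = A ++ B` where all nonempty suffix sums of `A` are < 0 (`A` is reverse-positive) and
all prefix sums of `B` are ≥ 0 (`B` is nonnegative); moreover the cut point is the first
point at which the sequence of prefix sums of `P` attains its minimum. -/
theorem geode_stmt19 (P : List ℤ) :
    (∃! AB : List ℤ × List ℤ,
      P = AB.1 ++ AB.2 ∧
      (∀ i : ℕ, i < AB.1.length → ((AB.1).drop i).sum < 0) ∧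
      (∀ i : ℕ, 0 ≤ ((AB.2).take i).sum)) ∧
    (∀ A B : List ℤ, P = A ++ B →
      (∀ i : ℕ, i < A.length → (A.drop i).sum < 0) →
      (∀ i : ℕ, 0 ≤ (B.take i).sum) →
      (∀ i : ℕ, (P.take A.length).sum ≤ (P.take i).sum) ∧
      (∀ i : ℕ, i < A.length → (P.take A.length).sum < (P.take i).sum)) := by
  obtain ⟨k, hmin, hfirst⟩ := Nat.exists_first_min P.exists_forall_sum_take_le
  refine ⟨⟨(P.take k, P.drop k), ⟨(P.take_append_drop k).symm,
    List.isReversePositive_take hfirst, List.isNonnegative_drop hmin⟩, ?_⟩, ?_⟩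
  · rintro ⟨A, B⟩ ⟨hP, hA, hB⟩
    obtain ⟨rfl, rfl⟩ := List.eq_of_append_eq_append_of_isReversePositive_of_isNonnegative hA hB
      (List.isReversePositive_take hfirst) (List.isNonnegative_drop hmin)
      (hP.symm.trans (P.take_append_drop k).symm)
    rfl
  · rintro A B rfl hA hB
    rw [List.take_left]
    exact ⟨List.sum_le_sum_take_append hA hB, fun i => List.sum_lt_sum_take_append B hA⟩
end
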